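/- arXiv:2604.15189 — 3 statements merged into one kernel-verified Lean document; each statement's English description precedes it below -/
import Mathlib

section
/- There exists a constant C > 0, depending only on n and on γ, such that the following holds: for every nonzero polynomial p ∈ ℂ[x₁,…,xₙ] with Height H(p) ≥ 1 and every natural number s, if there exist at least s distinct points of Γ at which p vanishes, then max_{ω ∈ Γ} |p(ω)| ≤ exp(C·t(p) − s/C). -/
open MvPolynomial

/-- The Height of a polynomial with complex coefficients: the maximum modulus of
its coefficients. -/
noncomputable def heightC {n : ℕ} (p : MvPolynomial (Fin n) ℂ) : ℝ :=
  ((p.support.sup fun α => ‖p.coeff α‖₊ : NNReal) : ℝ)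

/-- `t(p) := deg p + log H(p)`. -/
noncomputable def tC {n : ℕ} (p : MvPolynomial (Fin n) ℂ) : ℝ :=
  (p.totalDegree : ℝ) + Real.log (heightC p)

open Metric Finset in
/-- `dslope` of a function differentiable on the open unit ball and continuous on the
closed unit ball, at an interior point, is continuous on the closed unit ball. -/
lemma auxDslopeCont (g : ℂ → ℂ) (a : ℂ) (ha : a ∈ Metric.ball (0:ℂ) 1)
    (hd : DifferentiableOn ℂ g (Metric.ball (0:ℂ) 1))
    (hc : ContinuousOn g (Metric.closedBall (0:ℂ) 1)) :
    ContinuousOn (dslope g a) (Metric.closedBall (0:ℂ) 1) := by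
  intro z hz
  rcases eq_or_ne z a with rfl | hne
  · have hdd : DifferentiableAt ℂ g z := hd.differentiableAt (Metric.isOpen_ball.mem_nhds ha)
    exact (continuousAt_dslope_same.2 hdd).continuousWithinAt
  · exact (continuousWithinAt_dslope_of_ne hne).2 (hc z hz)

open Metric Finset in
/-- Factoring out finitely many zeros of an analytic function on the unit disk. -/
lemma auxFactor (T : Finset ℂ) :
    ∀ f : ℂ → ℂ, DifferentiableOn ℂ f (Metric.ball (0:ℂ) 1) →
    ContinuousOn f (Metric.closedBall (0:ℂ) 1) →
    (∀ a ∈ T, a ∈ Metric.ball (0:ℂ) 1 ∧ f a = 0) →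
    ∃ g : ℂ → ℂ, DifferentiableOn ℂ g (Metric.ball (0:ℂ) 1) ∧
      ContinuousOn g (Metric.closedBall (0:ℂ) 1) ∧
      ∀ z, f z = (∏ a ∈ T, (z - a)) * g z := by
  classical
  induction T using Finset.induction_on with
  | empty =>
    intro f hfd hfc _
    exact ⟨f, hfd, hfc, fun z => by simp⟩
  | @insert a T haT ih =>
    intro f hfd hfc hz
    obtain ⟨g, hgd, hgc, hgeq⟩ := ih f hfd hfc fun b hb => hz b (Finset.mem_insert_of_mem hb)
    have haball : a ∈ Metric.ball (0:ℂ) 1 := (hz a (Finset.mem_insert_self a T)).1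
    have hga : g a = 0 := by
      have hfa : f a = 0 := (hz a (Finset.mem_insert_self a T)).2
      have h := hgeq a
      rw [hfa] at h
      have hprod : (∏ b ∈ T, (a - b)) ≠ 0 := by
        refine Finset.prod_ne_zero_iff.2 fun b hb => sub_ne_zero.2 ?_
        rintro rfl; exact haT hb
      exact (mul_eq_zero.1 h.symm).resolve_left hprod
    refine ⟨dslope g a, ?_, ?_, ?_⟩
    · exact (Complex.differentiableOn_dslope (Metric.isOpen_ball.mem_nhds haball)).2 hgd
    · exact auxDslopeCont g a haball hgd hgc
    · intro z
      have hgz : g z = (z - a) * dslope g a z := by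
        have := sub_smul_dslope g a z
        rw [smul_eq_mul] at this
        rw [this, hga, sub_zero]
      rw [hgeq z, hgz, Finset.prod_insert haT]
      ring

/-- The Blaschke-type numerator is entire. -/
lemma auxProdDiff (T : Finset ℂ) :
    Differentiable ℂ fun z : ℂ => ∏ a ∈ T, (1 - (starRingEnd ℂ) a * z) := by
  classical
  induction T using Finset.induction_on with
  | empty => simpa using differentiable_const (1:ℂ)
  | @insert a T haT ih =>
    simp only [Finset.prod_insert haT]
    exact ((differentiable_const 1).sub ((differentiable_const _).mul differentiable_id)).mul ih

open Metric Finset in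
/-- The key Blaschke-product estimate: each zero in the small disk forces a `9/10` decay
of the sup of `f` on the small disk, relative to its sup on the unit disk. -/
lemma auxBound (f : ℂ → ℂ) (T : Finset ℂ) (M : ℝ)
    (hfd : DifferentiableOn ℂ f (Metric.ball (0:ℂ) 1))
    (hfc : ContinuousOn f (Metric.closedBall (0:ℂ) 1))
    (hT : ∀ a ∈ T, ‖a‖ ≤ (Real.exp 1)⁻¹ ∧ f a = 0)
    (hM : ∀ z ∈ Metric.closedBall (0:ℂ) 1, ‖f z‖ ≤ M) :
    ∀ z : ℂ, ‖z‖ ≤ (Real.exp 1)⁻¹ →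
      ‖f z‖ ≤ (9/10 : ℝ) ^ T.card * M := by
  classical
  have hrle : (Real.exp 1)⁻¹ ≤ 10 / 27 := by
    rw [inv_le_comm₀ (Real.exp_pos 1) (by norm_num)]
    linarith [Real.exp_one_gt_d9]
  have hrlt1 : (Real.exp 1)⁻¹ < 1 := by linarith
  have hrnn : (0:ℝ) ≤ (Real.exp 1)⁻¹ := by positivity
  obtain ⟨g, hgd, hgc, hgeq⟩ :=
    auxFactor T f hfd hfc fun a ha => by
      refine ⟨?_, (hT a ha).2⟩
      rw [mem_ball_zero_iff]
      exact lt_of_le_of_lt (hT a ha).1 hrlt1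
  set G : ℂ → ℂ := fun z => (∏ a ∈ T, (1 - (starRingEnd ℂ) a * z)) * g z with hG
  have hGd : DiffContOnCl ℂ G (Metric.ball (0:ℂ) 1) := by
    have hpd : Differentiable ℂ fun z : ℂ => ∏ a ∈ T, (1 - (starRingEnd ℂ) a * z) :=
      auxProdDiff T
    refine ⟨(hpd.differentiableOn).mul hgd, ?_⟩
    rw [closure_ball (0:ℂ) one_ne_zero]
    exact (hpd.continuous.continuousOn).mul hgc
  -- On the unit circle, `‖1 - conj a * z‖ = ‖z - a‖`.
  have hcirc : ∀ a z : ℂ, ‖z‖ = 1 → ‖1 - (starRingEnd ℂ) a * z‖ = ‖z - a‖ := by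
    intro a z hz
    have hz1 : z * (starRingEnd ℂ) z = 1 := by
      rw [Complex.mul_conj]
      norm_cast
      rw [Complex.normSq_eq_norm_sq, hz]
      norm_num
    have key : 1 - (starRingEnd ℂ) a * z = (starRingEnd ℂ) (z - a) * z := by
      rw [map_sub]
      linear_combination -hz1
    rw [key, norm_mul, RCLike.norm_conj, hz, mul_one]
  have hfront : ∀ z ∈ frontier (Metric.ball (0:ℂ) 1), ‖G z‖ ≤ M := by
    intro z hzf
    rw [frontier_ball (0:ℂ) one_ne_zero, mem_sphere_zero_iff_norm] at hzf
    have hGf : ‖G z‖ = ‖f z‖ := by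
      rw [hgeq z, hG]
      simp only [norm_mul, norm_prod]
      congr 1
      exact Finset.prod_congr rfl fun a _ => hcirc a z hzf
    rw [hGf]
    exact hM z (by simp [mem_closedBall_zero_iff, hzf])
  have hGle : ∀ w ∈ Metric.closedBall (0:ℂ) 1, ‖G w‖ ≤ M := by
    intro w hw
    refine Complex.norm_le_of_forall_mem_frontier_norm_le isBounded_ball hGd hfront ?_
    rwa [closure_ball (0:ℂ) one_ne_zero]
  intro z hzr
  have hz1 : z ∈ Metric.closedBall (0:ℂ) 1 := by
    rw [mem_closedBall_zero_iff]; exact hzr.trans hrlt1.le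
  -- each factor is at most 9/10 of the corresponding Blaschke denominator
  have hfac : ∀ a ∈ T, ‖z - a‖ ≤ (9/10 : ℝ) * ‖1 - (starRingEnd ℂ) a * z‖ := by
    intro a haT
    have ha : ‖a‖ ≤ (Real.exp 1)⁻¹ := (hT a haT).1
    have h1 : ‖z - a‖ ≤ 20 / 27 := by
      calc ‖z - a‖ ≤ ‖z‖ + ‖a‖ := norm_sub_le z a
        _ ≤ 10/27 + 10/27 := add_le_add (hzr.trans hrle) (ha.trans hrle)
        _ = 20/27 := by norm_num
    have h2 : (629 : ℝ)/729 ≤ ‖1 - (starRingEnd ℂ) a * z‖ := by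
      have h3 : ‖(starRingEnd ℂ) a * z‖ ≤ 100/729 := by
        rw [norm_mul, RCLike.norm_conj]
        calc ‖a‖ * ‖z‖ ≤ (10/27) * (10/27) := by
              apply mul_le_mul (ha.trans hrle) (hzr.trans hrle) (norm_nonneg z) (by norm_num)
          _ = 100/729 := by norm_num
      have h4 := norm_sub_norm_le (1:ℂ) ((starRingEnd ℂ) a * z)
      rw [norm_one] at h4
      linarith
    nlinarith [norm_nonneg (1 - (starRingEnd ℂ) a * z)]
  have hprodle : (∏ a ∈ T, ‖z - a‖) ≤
      (9/10 : ℝ) ^ T.card * ∏ a ∈ T, ‖1 - (starRingEnd ℂ) a * z‖ := by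
    calc (∏ a ∈ T, ‖z - a‖)
        ≤ ∏ a ∈ T, (9/10 : ℝ) * ‖1 - (starRingEnd ℂ) a * z‖ :=
          Finset.prod_le_prod (fun a _ => norm_nonneg _) hfac
      _ = (9/10 : ℝ) ^ T.card * ∏ a ∈ T, ‖1 - (starRingEnd ℂ) a * z‖ := by
          rw [Finset.prod_mul_distrib, Finset.prod_const]
  calc ‖f z‖ = (∏ a ∈ T, ‖z - a‖) * ‖g z‖ := by
        rw [hgeq z, norm_mul, norm_prod]
    _ ≤ ((9/10 : ℝ) ^ T.card * ∏ a ∈ T, ‖1 - (starRingEnd ℂ) a * z‖) * ‖g z‖ :=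
        mul_le_mul_of_nonneg_right hprodle (norm_nonneg _)
    _ = (9/10 : ℝ) ^ T.card * ‖G z‖ := by
        rw [hG]; simp only [norm_mul, norm_prod]; ring
    _ ≤ (9/10 : ℝ) ^ T.card * M :=
        mul_le_mul_of_nonneg_left (hGle z hz1) (by positivity)

/-- The number of monomials of a multivariate polynomial in `n` variables is at most
`(d+1)^n` where `d` is the total degree. -/
lemma auxCard {n : ℕ} (p : MvPolynomial (Fin n) ℂ) :
    p.support.card ≤ (p.totalDegree + 1) ^ n := by
  classical
  set d := p.totalDegree with hd
  have hmem : ∀ α ∈ p.support, ∀ j, α j ≤ d := by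
    intro α hα j
    have h1 : α j ≤ α.sum fun _ e => e := by
      rcases Nat.eq_zero_or_pos (α j) with h | h
      · omega
      · have hj : j ∈ α.support := Finsupp.mem_support_iff.2 (by omega)
        have := Finset.single_le_sum (f := fun j => α j) (fun i _ => Nat.zero_le _) hj
        simpa [Finsupp.sum] using this
    exact h1.trans (MvPolynomial.le_totalDegree hα)
  have h := Finset.card_le_card_of_injOn
    (t := (Finset.univ : Finset (Fin n → Fin (d+1))))
    (fun (α : Fin n →₀ ℕ) => fun j => (⟨min (α j) d, by omega⟩ : Fin (d+1)))
    (fun α _ => Finset.mem_univ _)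
    (fun α hα β hβ hfeq => by
      ext j
      have h1 := congrFun hfeq j
      simp only [Fin.mk.injEq] at h1
      rwa [Nat.min_eq_left (hmem α hα j), Nat.min_eq_left (hmem β hβ j)] at h1)
  simpa [Fintype.card_fun, Finset.card_univ] using h

/-- Bound for evaluation of a multivariate polynomial in terms of height, total degree
and a bound on the coordinates. -/
lemma auxEvalBound {n : ℕ} (p : MvPolynomial (Fin n) ℂ) (ω : Fin n → ℂ) (B : ℝ)
    (hB : 1 ≤ B) (hω : ∀ j, ‖ω j‖ ≤ B) :
    ‖MvPolynomial.eval ω p‖ ≤ p.support.card * heightC p * B ^ p.totalDegree := by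
  classical
  have hHnn : 0 ≤ heightC p := NNReal.coe_nonneg _
  have hcoef : ∀ α ∈ p.support, ‖p.coeff α‖ ≤ heightC p := by
    intro α hα
    have : ‖p.coeff α‖₊ ≤ p.support.sup fun α => ‖p.coeff α‖₊ :=
      Finset.le_sup (f := fun α => ‖p.coeff α‖₊) hα
    exact_mod_cast this
  rw [MvPolynomial.eval_eq]
  calc ‖∑ α ∈ p.support, p.coeff α * ∏ j ∈ α.support, ω j ^ α j‖
      ≤ ∑ α ∈ p.support, ‖p.coeff α * ∏ j ∈ α.support, ω j ^ α j‖ := norm_sum_le _ _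
    _ ≤ ∑ α ∈ p.support, heightC p * B ^ p.totalDegree := by
        apply Finset.sum_le_sum
        intro α hα
        rw [norm_mul]
        have hprod : ‖∏ j ∈ α.support, ω j ^ α j‖ ≤ B ^ p.totalDegree := by
          rw [norm_prod]
          calc (∏ j ∈ α.support, ‖ω j ^ α j‖)
              ≤ ∏ j ∈ α.support, B ^ α j := by
                apply Finset.prod_le_prod (fun j _ => norm_nonneg _)
                intro j _
                rw [norm_pow]
                exact pow_le_pow_left₀ (norm_nonneg _) (hω j) _
            _ = B ^ (α.sum fun _ e => e) := by
                rw [Finsupp.sum, Finset.prod_pow_eq_pow_sum]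
            _ ≤ B ^ p.totalDegree :=
                pow_le_pow_right₀ hB (MvPolynomial.le_totalDegree hα)
        exact mul_le_mul (hcoef α hα) hprod (norm_nonneg _) hHnn
    _ = p.support.card * heightC p * B ^ p.totalDegree := by
        rw [Finset.sum_const, nsmul_eq_mul]; ring

/-- Let `γ : closure(D₁) → ℂⁿ` be continuous on the closed unit disk and analytic
on the open unit disk, and let `Γ := γ(closure(D_{1/e}))`.  There is a constant `C > 0`
(depending only on `n` and `γ`) such that for every nonzero polynomial `p ∈ ℂ[x₁,…,xₙ]` with
Height `≥ 1` and every `s : ℕ`, if `p` vanishes at `s` distinct points of `Γ`, then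
`max_{ω ∈ Γ} |p(ω)| ≤ exp(C·t(p) − s/C)`. -/
theorem statement0 (n : ℕ) (γ : ℂ → (Fin n → ℂ))
    (hcont : ContinuousOn γ (Metric.closedBall 0 1))
    (hanal : AnalyticOn ℂ γ (Metric.ball 0 1)) :
    ∃ C : ℝ, 0 < C ∧
      ∀ p : MvPolynomial (Fin n) ℂ, p ≠ 0 → 1 ≤ heightC p →
        ∀ s : ℕ,
          (∃ S : Finset (Fin n → ℂ), s ≤ S.card ∧
            ↑S ⊆ γ '' Metric.closedBall 0 (Real.exp 1)⁻¹ ∧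
            ∀ ω ∈ S, MvPolynomial.eval ω p = 0) →
          ∀ ω ∈ γ '' Metric.closedBall 0 (Real.exp 1)⁻¹,
            ‖MvPolynomial.eval ω p‖ ≤ Real.exp (C * tC p - (s : ℝ) / C) := by
  classical
  -- A bound on the coordinates of γ on the closed unit ball
  obtain ⟨B₀, hB₀⟩ := (isCompact_closedBall (0:ℂ) 1).exists_bound_of_continuousOn hcont
  set B : ℝ := max B₀ 1 with hBdef
  have hB1 : 1 ≤ B := le_max_right _ _
  have hBb : ∀ z ∈ Metric.closedBall (0:ℂ) 1, ∀ j, ‖γ z j‖ ≤ B := by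
    intro z hz j
    calc ‖γ z j‖ ≤ ‖γ z‖ := norm_le_pi_norm (γ z) j
      _ ≤ B₀ := hB₀ z hz
      _ ≤ B := le_max_left _ _
  have hlogB : 0 ≤ Real.log B := Real.log_nonneg hB1
  set C₀ : ℝ := (n : ℝ) + 1 + Real.log B with hC₀def
  have hC₀pos : 0 < C₀ := by positivity
  have hlog109 : 0 < Real.log (10/9) := Real.log_pos (by norm_num)
  refine ⟨C₀ + (Real.log (10/9))⁻¹, by positivity, ?_⟩
  set C : ℝ := C₀ + (Real.log (10/9))⁻¹ with hCdef
  have hCpos : 0 < C := by positivity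
  intro p hp0 hH s ⟨S, hScard, hSsub, hSzero⟩ ω hω
  set f : ℂ → ℂ := fun z => MvPolynomial.eval (γ z) p with hfdef
  set d : ℕ := p.totalDegree
  set H : ℝ := heightC p
  have hHpos : 0 < H := lt_of_lt_of_le one_pos hH
  have hh : 0 ≤ Real.log H := Real.log_nonneg hH
  have htnn : 0 ≤ tC p := by
    unfold tC; positivity
  -- Differentiability of the polynomial evaluation map
  have hpd : Differentiable ℂ fun x : Fin n → ℂ => MvPolynomial.eval x p := by
    apply MvPolynomial.induction_on p
    · intro a; simpa using differentiable_const a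
    · intro q r hq hr; simp only [map_add]; exact hq.add hr
    · intro q i hq
      simp only [map_mul, MvPolynomial.eval_X]
      exact hq.mul (ContinuousLinearMap.proj i : (Fin n → ℂ) →L[ℂ] ℂ).differentiable
  have hγd : DifferentiableOn ℂ γ (Metric.ball (0:ℂ) 1) :=
    fun z hz => (hanal z hz).differentiableWithinAt.mono (Set.subset_insert z _)
  have hfd : DifferentiableOn ℂ f (Metric.ball (0:ℂ) 1) :=
    hpd.comp_differentiableOn hγd
  have hfc : ContinuousOn f (Metric.closedBall (0:ℂ) 1) :=
    hpd.continuous.comp_continuousOn hcont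
  -- sup bound on the closed unit ball
  set M : ℝ := Real.exp (C₀ * tC p) with hMdef
  have hscard1 : 1 ≤ p.support.card := by
    rcases Finset.eq_empty_or_nonempty p.support with h | h
    · exact absurd (by simpa using h) hp0
    · exact h.card_pos
  have hM : ∀ z ∈ Metric.closedBall (0:ℂ) 1, ‖f z‖ ≤ M := by
    intro z hz
    have h1 : ‖f z‖ ≤ p.support.card * H * B ^ d :=
      auxEvalBound p (γ z) B hB1 (hBb z hz)
    refine h1.trans ?_
    have hcard : (p.support.card : ℝ) ≤ ((d+1 : ℕ) : ℝ) ^ n := by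
      have := auxCard p
      calc (p.support.card : ℝ) ≤ (((d + 1) ^ n : ℕ) : ℝ) := by exact_mod_cast this
        _ = ((d+1 : ℕ) : ℝ) ^ n := by push_cast; ring
    have hd1pos : (0:ℝ) < ((d+1 : ℕ) : ℝ) := by positivity
    have hlogd : Real.log ((d+1 : ℕ) : ℝ) ≤ (d : ℝ) := by
      have := Real.log_le_sub_one_of_pos hd1pos
      have h2 : (((d+1 : ℕ) : ℝ)) - 1 = (d : ℝ) := by push_cast; ring
      linarith
    have hcexp : ((d+1 : ℕ) : ℝ) ^ n = Real.exp ((n : ℝ) * Real.log ((d+1:ℕ) : ℝ)) := by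
      rw [← Real.log_pow, Real.exp_log (by positivity)]
    have hHexp : H = Real.exp (Real.log H) := (Real.exp_log hHpos).symm
    have hBexp : B ^ d = Real.exp ((d : ℝ) * Real.log B) := by
      rw [← Real.log_pow, Real.exp_log (by positivity)]
    calc (p.support.card : ℝ) * H * B ^ d
        ≤ ((d+1:ℕ) : ℝ) ^ n * H * B ^ d := by
          apply mul_le_mul_of_nonneg_right (mul_le_mul_of_nonneg_right hcard hHpos.le)
          positivity
      _ = Real.exp ((n : ℝ) * Real.log ((d+1:ℕ):ℝ) + Real.log H + (d:ℝ) * Real.log B) := by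
          rw [Real.exp_add, Real.exp_add, ← hcexp, ← hBexp, Real.exp_log hHpos]
      _ ≤ M := by
          rw [hMdef, Real.exp_le_exp]
          have h3 : (n : ℝ) * Real.log ((d+1:ℕ):ℝ) ≤ (n : ℝ) * (d : ℝ) :=
            mul_le_mul_of_nonneg_left hlogd (Nat.cast_nonneg n)
          have ht : tC p = (d : ℝ) + Real.log H := rfl
          rw [hC₀def, ht]
          nlinarith [(by positivity : (0:ℝ) ≤ (d:ℝ)), (by positivity : (0:ℝ) ≤ (n:ℝ)), hh, hlogB]
  -- construct the finset of zeros in the small disk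
  set u : (Fin n → ℂ) → ℂ := fun w =>
    if h : ∃ z ∈ Metric.closedBall (0:ℂ) (Real.exp 1)⁻¹, γ z = w then h.choose else 0 with hudef
  have hu : ∀ w ∈ S, u w ∈ Metric.closedBall (0:ℂ) (Real.exp 1)⁻¹ ∧ γ (u w) = w := by
    intro w hw
    obtain ⟨z, hz, hzw⟩ := hSsub hw
    have hex : ∃ z ∈ Metric.closedBall (0:ℂ) (Real.exp 1)⁻¹, γ z = w := ⟨z, hz, hzw⟩
    rw [hudef]
    simp only [dif_pos hex]
    exact ⟨hex.choose_spec.1, hex.choose_spec.2⟩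
  set T : Finset ℂ := S.image u with hTdef
  have hTcard : S.card = T.card := by
    rw [hTdef]
    exact (Finset.card_image_of_injOn fun w hw w' hw' h => by
      rw [← (hu w hw).2, ← (hu w' hw').2, h]).symm
  have hT : ∀ a ∈ T, ‖a‖ ≤ (Real.exp 1)⁻¹ ∧ f a = 0 := by
    intro a ha
    rw [hTdef, Finset.mem_image] at ha
    obtain ⟨w, hw, rfl⟩ := ha
    obtain ⟨h1, h2⟩ := hu w hw
    refine ⟨by rwa [← mem_closedBall_zero_iff], ?_⟩
    rw [hfdef]; simp only; rw [h2]
    exact hSzero w hw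
  -- apply the key estimate
  obtain ⟨z, hz, rfl⟩ := hω
  have hzn : ‖z‖ ≤ (Real.exp 1)⁻¹ := by rwa [← mem_closedBall_zero_iff]
  have hkey := auxBound f T M hfd hfc hT hM z hzn
  have hpow : (9/10 : ℝ) ^ T.card ≤ (9/10 : ℝ) ^ s := by
    apply pow_le_pow_of_le_one (by norm_num) (by norm_num)
    omega
  have hMpos : 0 < M := Real.exp_pos _
  have hfinal : ‖f z‖ ≤ (9/10 : ℝ) ^ s * M :=
    hkey.trans (mul_le_mul_of_nonneg_right hpow hMpos.le)
  refine hfinal.trans ?_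
  have h910 : ((9:ℝ)/10) ^ s = Real.exp ((s : ℝ) * Real.log (9/10)) := by
    rw [Real.exp_nat_mul, Real.exp_log (by norm_num)]
  rw [h910, hMdef, ← Real.exp_add, Real.exp_le_exp]
  have hlogeq : Real.log ((9:ℝ)/10) = - Real.log (10/9) := by
    rw [← Real.log_inv]; norm_num
  have h1 : C₀ * tC p ≤ C * tC p := by
    apply mul_le_mul_of_nonneg_right _ htnn
    rw [hCdef]
    have : 0 < (Real.log (10/9))⁻¹ := by positivity
    linarith
  have h2 : (s : ℝ) / C ≤ (s : ℝ) * Real.log (10/9) := by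
    rw [div_eq_mul_inv]
    apply mul_le_mul_of_nonneg_left _ (Nat.cast_nonneg s)
    rw [inv_le_comm₀ hCpos hlog109, hCdef]
    linarith
  have h3 : (s:ℝ) * Real.log (9/10) = -((s:ℝ) * Real.log (10/9)) := by rw [hlogeq]; ring
  clear_value C C₀ M f T u
  linarith
end

section
/- Let δ ≥ 2 be a real number, let Q ∈ ℤ[x₁,…,xₙ] be a nonzero polynomial with deg Q ≤ δ, and let x ∈ ℂⁿ. Then norm(Q^proj, (1, x₁, …, xₙ)) / norm(Q^proj) ≤ |Q(x)| · (n+1)^{δ/2}. -/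
open MvPolynomial

/-- The homogenization `Q^proj := X₀^{deg Q} · Q(X₁/X₀, …, Xₙ/X₀)` of a polynomial
`Q ∈ R[x₁,…,xₙ]`, as a polynomial in `R[X₀,…,Xₙ]`. -/
noncomputable def projPoly {n : ℕ} {R : Type*} [CommSemiring R]
    (Q : MvPolynomial (Fin n) R) : MvPolynomial (Fin (n + 1)) R :=
  ∑ α ∈ Q.support,
    MvPolynomial.monomial
      (Finsupp.single (0 : Fin (n + 1)) (Q.totalDegree - α.sum fun _ e => e) +
        α.mapDomain Fin.succ)
      (Q.coeff α)

/-- `norm(P) := sqrt(Σ_β |P_β|² / multinomial(D; β))` for a homogeneous polynomial `P`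
of degree `D` (each `β` in the support has `Σᵢ βᵢ = D`, and
`multinomial(D; β) = D! / (β₀!⋯βₙ!)`). -/
noncomputable def normH {n : ℕ} (P : MvPolynomial (Fin (n + 1)) ℂ) : ℝ :=
  Real.sqrt (∑ β ∈ P.support, ‖P.coeff β‖ ^ 2 / (Nat.multinomial Finset.univ ⇑β : ℝ))

/-- The ℓ₂ norm `‖x‖₂ = sqrt(Σᵢ |xᵢ|²)` of a vector of complex numbers. -/
noncomputable def l2norm {m : ℕ} (x : Fin m → ℂ) : ℝ :=
  Real.sqrt (∑ i, ‖x i‖ ^ 2)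

/-- `norm(P, x) := |P(x)| / ‖x‖₂^{deg P}`. -/
noncomputable def normAt {n : ℕ} (P : MvPolynomial (Fin (n + 1)) ℂ)
    (x : Fin (n + 1) → ℂ) : ℝ :=
  ‖MvPolynomial.eval x P‖ / (l2norm x) ^ P.totalDegree

lemma multinomial_le_pow {m : ℕ} (β : Fin m → ℕ) :
    Nat.multinomial Finset.univ β ≤ m ^ (∑ i, β i) := by
  classical
  have h := Finset.sum_pow_eq_sum_piAntidiag (Finset.univ : Finset (Fin m))
    (fun _ => (1 : ℕ)) (∑ i, β i)
  simp only [one_pow, Finset.prod_const_one, mul_one, Finset.sum_const, smul_eq_mul,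
    Finset.card_univ, Fintype.card_fin] at h
  rw [h]
  exact Finset.single_le_sum (fun k _ => Nat.zero_le _)
    (by simp [Finset.mem_piAntidiag])

lemma eval_projPoly {n : ℕ} (R : MvPolynomial (Fin n) ℂ) (x : Fin n → ℂ) :
    MvPolynomial.eval (Fin.cons 1 x) (projPoly R) = MvPolynomial.eval x R := by
  rw [projPoly, map_sum, MvPolynomial.eval_eq']
  refine Finset.sum_congr rfl fun α hα => ?_
  rw [MvPolynomial.eval_monomial,
    Finsupp.prod_add_index' (fun i => pow_zero _) (fun i a b => pow_add _ _ _),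
    Finsupp.prod_mapDomain_index_inj (Fin.succ_injective n)]
  have hs : ((Finsupp.single (0 : Fin (n + 1)) (R.totalDegree - α.sum fun _ e => e)).prod
      fun i e => (Fin.cons 1 x : Fin (n + 1) → ℂ) i ^ e) = 1 := by
    rw [Finsupp.prod]
    apply Finset.prod_eq_one
    intro i hi
    have hi0 : i = 0 := by
      have := Finsupp.support_single_subset hi
      simpa using this
    subst hi0
    simp
  rw [hs, one_mul]
  congr 1
  rw [Finsupp.prod_pow]
  exact Finset.prod_congr rfl fun i _ => by simp

lemma coeff_projPoly {n : ℕ} (R : MvPolynomial (Fin n) ℂ) (α : Fin n →₀ ℕ)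
    (hα : α ∈ R.support) :
    (projPoly R).coeff
        (Finsupp.single (0 : Fin (n + 1)) (R.totalDegree - α.sum fun _ e => e) +
          α.mapDomain Fin.succ) = R.coeff α := by
  rw [projPoly, MvPolynomial.coeff_sum]
  rw [Finset.sum_eq_single α]
  · simp [MvPolynomial.coeff_monomial]
  · intro b hb hne
    rw [MvPolynomial.coeff_monomial, if_neg]
    intro heq
    apply hne
    ext i
    have h2 := DFunLike.congr_fun heq (Fin.succ i)
    simpa [Finsupp.single_apply, (Fin.succ_ne_zero i).symm,
      Finsupp.mapDomain_apply (Fin.succ_injective n)] using h2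
  · intro h; exact absurd hα h

/-- Let `δ ≥ 2` be a real number, `Q ∈ ℤ[x₁,…,xₙ]` a nonzero polynomial with
`deg Q ≤ δ`, and `x ∈ ℂⁿ`.  Then
`norm(Q^proj, (1, x₁, …, xₙ)) / norm(Q^proj) ≤ |Q(x)| · (n+1)^{δ/2}`. -/
theorem statement2 {n : ℕ} (δ : ℝ) (hδ : 2 ≤ δ)
    (Q : MvPolynomial (Fin n) ℤ) (hQ : Q ≠ 0) (hdeg : (Q.totalDegree : ℝ) ≤ δ)
    (x : Fin n → ℂ) :
    normAt (projPoly (Q.map (Int.castRingHom ℂ))) (Fin.cons 1 x) /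
        normH (projPoly (Q.map (Int.castRingHom ℂ))) ≤
      ‖MvPolynomial.eval x (Q.map (Int.castRingHom ℂ))‖ * ((n : ℝ) + 1) ^ (δ / 2) := by
  classical
  set Qc := Q.map (Int.castRingHom ℂ) with hQcdef
  have hinj : Function.Injective (MvPolynomial.map (Int.castRingHom ℂ) :
      MvPolynomial (Fin n) ℤ → MvPolynomial (Fin n) ℂ) :=
    MvPolynomial.map_injective _ Int.cast_injective
  have hQc : Qc ≠ 0 := fun h => hQ (hinj (by simpa [hQcdef] using h))
  set P := projPoly Qc with hP
  set D := Qc.totalDegree with hD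
  have hDQ : (D : ℝ) ≤ δ := by
    have hsupp : Qc.support = Q.support := by
      rw [hQcdef]
      exact MvPolynomial.support_map_of_injective _ Int.cast_injective
    have hDeq : D = Q.totalDegree := by
      rw [hD, MvPolynomial.totalDegree, MvPolynomial.totalDegree, hsupp]
    rw [hDeq]; exact hdeg
  -- pick a nonzero coefficient
  obtain ⟨α₀, hα₀⟩ := (MvPolynomial.support_nonempty.mpr hQc)
  set β₀ := Finsupp.single (0 : Fin (n + 1)) (D - α₀.sum fun _ e => e) +
      α₀.mapDomain Fin.succ with hβ₀
  have hcoeff : P.coeff β₀ = Qc.coeff α₀ := coeff_projPoly Qc α₀ hα₀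
  have hcne : Qc.coeff α₀ ≠ 0 := MvPolynomial.mem_support_iff.mp hα₀
  have hβsupp : β₀ ∈ P.support := MvPolynomial.mem_support_iff.mpr (hcoeff ▸ hcne)
  -- the coefficient is an integer of norm ≥ 1
  have hnorm1 : (1 : ℝ) ≤ ‖P.coeff β₀‖ := by
    rw [hcoeff, hQcdef, MvPolynomial.coeff_map]
    have hz : Q.coeff α₀ ≠ 0 := by
      intro h
      apply hcne
      rw [hQcdef, MvPolynomial.coeff_map, h]; simp
    have h1z : (1 : ℤ) ≤ |Q.coeff α₀| := Int.one_le_abs hz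
    have : ((Int.castRingHom ℂ) (Q.coeff α₀) : ℂ) = ((Q.coeff α₀ : ℤ) : ℂ) := by
      simp
    rw [this, Complex.norm_intCast]
    exact_mod_cast h1z
  -- sum of β₀ equals D
  have hsum : (∑ i, β₀ i) = D := by
    have hle : (α₀.sum fun _ e => e) ≤ D := MvPolynomial.le_totalDegree hα₀
    have h1 : (∑ i, Finsupp.single (0 : Fin (n + 1)) (D - α₀.sum fun _ e => e) i)
        = D - α₀.sum fun _ e => e := by
      rw [← Finsupp.sum_fintype (Finsupp.single (0 : Fin (n + 1))
        (D - α₀.sum fun _ e => e)) (fun _ e => e) (fun _ => rfl)]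
      exact Finsupp.sum_single_index rfl
    have h2 : (∑ i, (α₀.mapDomain Fin.succ) i) = α₀.sum fun _ e => e := by
      rw [← Finsupp.sum_fintype (α₀.mapDomain Fin.succ) (fun _ e => e) (fun _ => rfl)]
      exact Finsupp.sum_mapDomain_index (fun _ => rfl) (fun _ _ _ => rfl)
    simp only [hβ₀, Finsupp.add_apply, Finset.sum_add_distrib, h1, h2]
    omega
  -- multinomial bound
  have hmult : (Nat.multinomial Finset.univ ⇑β₀ : ℝ) ≤ ((n : ℝ) + 1) ^ (δ : ℝ) := by
    have h1 : Nat.multinomial Finset.univ ⇑β₀ ≤ (n + 1) ^ D := by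
      have := multinomial_le_pow (m := n + 1) ⇑β₀
      rwa [hsum] at this
    calc (Nat.multinomial Finset.univ ⇑β₀ : ℝ) ≤ ((n + 1 : ℕ) : ℝ) ^ D := by
          exact_mod_cast h1
      _ = ((n : ℝ) + 1) ^ (D : ℝ) := by
          rw [Real.rpow_natCast]; norm_num
      _ ≤ ((n : ℝ) + 1) ^ (δ : ℝ) := by
          apply Real.rpow_le_rpow_of_exponent_le (by norm_num) hDQ
  set M : ℝ := ((n : ℝ) + 1) ^ (δ / 2) with hM
  have hMpos : 0 < M := Real.rpow_pos_of_pos (by positivity) _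
  have hmultpos : (0 : ℝ) < (Nat.multinomial Finset.univ ⇑β₀ : ℝ) := by
    exact_mod_cast Nat.multinomial_pos _ _
  -- normH lower bound
  have hnormH : 1 / M ≤ normH P := by
    have hterm : 1 / M ^ 2 ≤ ‖P.coeff β₀‖ ^ 2 / (Nat.multinomial Finset.univ ⇑β₀ : ℝ) := by
      have hM2 : M ^ 2 = ((n : ℝ) + 1) ^ (δ : ℝ) := by
        rw [hM, ← Real.rpow_natCast (((n : ℝ) + 1) ^ (δ / 2)) 2, ← Real.rpow_mul (by positivity)]
        norm_num
      rw [hM2]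
      apply div_le_div₀ (by positivity) _ hmultpos hmult
      nlinarith [hnorm1]
    have hsumge : 1 / M ^ 2 ≤
        ∑ β ∈ P.support, ‖P.coeff β‖ ^ 2 / (Nat.multinomial Finset.univ ⇑β : ℝ) := by
      refine le_trans hterm (Finset.single_le_sum
        (f := fun β => ‖P.coeff β‖ ^ 2 / (Nat.multinomial Finset.univ ⇑β : ℝ))
        (fun β _ => by positivity) hβsupp)
    rw [normH]
    calc 1 / M = Real.sqrt ((1 / M) ^ 2) := (Real.sqrt_sq (by positivity)).symm
      _ = Real.sqrt (1 / M ^ 2) := by rw [div_pow, one_pow]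
      _ ≤ _ := Real.sqrt_le_sqrt hsumge
  have hnormHpos : 0 < normH P := lt_of_lt_of_le (by positivity) hnormH
  -- l2 norm at least 1
  have hL : 1 ≤ l2norm (Fin.cons 1 x : Fin (n + 1) → ℂ) := by
    rw [l2norm]
    rw [show (1 : ℝ) = Real.sqrt 1 by simp]
    apply Real.sqrt_le_sqrt
    have : (1 : ℝ) = ‖(Fin.cons 1 x : Fin (n + 1) → ℂ) 0‖ ^ 2 := by simp
    rw [this]
    exact Finset.single_le_sum
      (f := fun i => ‖(Fin.cons 1 x : Fin (n + 1) → ℂ) i‖ ^ 2)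
      (fun i _ => by positivity) (Finset.mem_univ (0 : Fin (n + 1)))
  have hLpow : 1 ≤ (l2norm (Fin.cons 1 x : Fin (n + 1) → ℂ)) ^ P.totalDegree :=
    one_le_pow₀ hL
  -- normAt bound
  have hnormAt : normAt P (Fin.cons 1 x) ≤ ‖MvPolynomial.eval x Qc‖ := by
    rw [normAt, eval_projPoly]
    calc ‖MvPolynomial.eval x Qc‖ / (l2norm (Fin.cons 1 x)) ^ P.totalDegree
        ≤ ‖MvPolynomial.eval x Qc‖ / 1 :=
          div_le_div_of_nonneg_left (norm_nonneg _) one_pos hLpow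
      _ = _ := by ring
  rw [div_le_iff₀ hnormHpos]
  calc normAt P (Fin.cons 1 x) ≤ ‖MvPolynomial.eval x Qc‖ := hnormAt
    _ = ‖MvPolynomial.eval x Qc‖ * 1 := by ring
    _ ≤ ‖MvPolynomial.eval x Qc‖ * (M * normH P) := by
        apply mul_le_mul_of_nonneg_left _ (norm_nonneg _)
        calc (1 : ℝ) = M * (1 / M) := by field_simp
          _ ≤ M * normH P := mul_le_mul_of_nonneg_left hnormH hMpos.le
    _ = ‖MvPolynomial.eval x Qc‖ * M * normH P := by ring
end

section
/- Let n ≥ 1 and k ≥ 0 be integers, let a₀ be a positive integer, and let δ, τ, σ, U : ℕ → ℝ be non-decreasing functions taking values in [2, ∞). Let γ₁, γ₂, γ₃ be positive reals such that for every integer a ≥ a₀: (1) σ(a)^{k+1} < τ(a) + n·δ(a); (2) a^{γ₁} < U(a) / ((δ(a) + τ(a)) · δ(a)^k · σ(a)^{k+1}) < a^{γ₂}; (3) U(⌈a^{γ₃}⌉) ≤ τ(a). Let c₁, c₂ be positive reals with c₁ < γ₃/γ₂ and c₂ > 1/γ₁, and set a₁ := a₀^{max(1, 1/γ₃)}. Then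 for every sufficiently large real number T the following hold: (i) there exists a smallest integer i₀ ≥ a₁ satisfying 2(k+1)·T·(δ(i₀) + (k+1)·(τ(i₀) + n·δ(i₀)) + 3·log(n+1)·δ(i₀)) < U(i₀) / (δ(i₀)^k · σ(i₀)^{k+1}); (ii) setting τ₀ := τ(i₀) + n·δ(i₀), σ₀ := σ(i₀), and U₀ := U(i₀)/2, for every real S with τ₀/σ₀^{k+1} < S ≤ U₀/σ₀^{k+1}, the smallest positive integer N₀ satisfying 2S ≤ U(N₀)/σ₀^{k+1} exists and satisfies N₀ ≤ i₀, τ₀ < U(N₀)/2, and T^{c₁} ≤ N₀ ≤ T^{c₂}. -/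
set_option maxHeartbeats 1000000


/-- quantitative bookkeeping from the proof of the modified criterion for
algebraic independence.  Given non-decreasing functions `δ, τ, σ, U : ℕ_{≥a₀} → [2,∞)`
satisfying assumptions (1)–(3), constants `c₁ < γ₃/γ₂`, `c₂ > 1/γ₁`, and
`a₁ := a₀^{max(1,1/γ₃)}`, for every sufficiently large real `T`:
(i) there is a smallest integer `i₀ ≥ a₁` with
`2(k+1)·T·(δ(i₀) + (k+1)(τ(i₀)+n·δ(i₀)) + 3·log(n+1)·δ(i₀)) < U(i₀)/(δ(i₀)^k·σ(i₀)^{k+1})`;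
(ii) setting `τ₀ := τ(i₀)+n·δ(i₀)`, `σ₀ := σ(i₀)`, `U₀ := U(i₀)/2`, for every real `S` with
`τ₀/σ₀^{k+1} < S ≤ U₀/σ₀^{k+1}`, the smallest positive integer `N₀` with
`2S ≤ U(N₀)/σ₀^{k+1}` exists and satisfies `N₀ ≤ i₀`, `τ₀ < U(N₀)/2`, and
`T^{c₁} ≤ N₀ ≤ T^{c₂}`. -/
theorem statement9 (n k : ℕ) (hn : 1 ≤ n) (a₀ : ℕ) (ha₀ : 0 < a₀)
    (δ τ σ U : ℕ → ℝ)
    (hδm : MonotoneOn δ (Set.Ici a₀)) (hτm : MonotoneOn τ (Set.Ici a₀))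
    (hσm : MonotoneOn σ (Set.Ici a₀)) (hUm : MonotoneOn U (Set.Ici a₀))
    (hδ2 : ∀ a, a₀ ≤ a → 2 ≤ δ a) (hτ2 : ∀ a, a₀ ≤ a → 2 ≤ τ a)
    (hσ2 : ∀ a, a₀ ≤ a → 2 ≤ σ a) (hU2 : ∀ a, a₀ ≤ a → 2 ≤ U a)
    (γ₁ γ₂ γ₃ : ℝ) (hγ₁ : 0 < γ₁) (hγ₂ : 0 < γ₂) (hγ₃ : 0 < γ₃)
    (h1 : ∀ a, a₀ ≤ a → σ a ^ (k + 1) < τ a + n * δ a)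
    (h2 : ∀ a, a₀ ≤ a →
      (a : ℝ) ^ γ₁ < U a / ((δ a + τ a) * δ a ^ k * σ a ^ (k + 1)) ∧
      U a / ((δ a + τ a) * δ a ^ k * σ a ^ (k + 1)) < (a : ℝ) ^ γ₂)
    (h3 : ∀ a, a₀ ≤ a → U ⌈(a : ℝ) ^ γ₃⌉₊ ≤ τ a)
    (c₁ c₂ : ℝ) (hc₁ : 0 < c₁) (hc₁' : c₁ < γ₃ / γ₂) (hc₂ : 0 < c₂) (hc₂' : 1 / γ₁ < c₂) :
    ∃ T₀ : ℝ, ∀ T : ℝ, T₀ ≤ T →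
      ∃ i₀ : ℕ,
        IsLeast {i : ℕ |
          (a₀ : ℝ) ^ max 1 (1 / γ₃) ≤ (i : ℝ) ∧
          2 * ((k : ℝ) + 1) * T *
              (δ i + ((k : ℝ) + 1) * (τ i + n * δ i) + 3 * Real.log ((n : ℝ) + 1) * δ i) <
            U i / (δ i ^ k * σ i ^ (k + 1))} i₀ ∧
        ∀ S : ℝ,
          (τ i₀ + n * δ i₀) / σ i₀ ^ (k + 1) < S →
          S ≤ (U i₀ / 2) / σ i₀ ^ (k + 1) →
          ∃ N₀ : ℕ,
            IsLeast {N : ℕ | 0 < N ∧ 2 * S ≤ U N / σ i₀ ^ (k + 1)} N₀ ∧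
            N₀ ≤ i₀ ∧
            τ i₀ + n * δ i₀ < U N₀ / 2 ∧
            T ^ c₁ ≤ (N₀ : ℝ) ∧ (N₀ : ℝ) ≤ T ^ c₂ := by
  classical
  have hn1 : (1:ℝ) ≤ (n:ℝ) := by exact_mod_cast hn
  have ha₀1 : (1:ℝ) ≤ (a₀:ℝ) := by exact_mod_cast ha₀
  have hk0 : (0:ℝ) ≤ (k:ℝ) := Nat.cast_nonneg k
  set L : ℝ := Real.log ((n:ℝ) + 1) with hLdef
  clear_value L
  have hL : 0 < L := by rw [hLdef]; exact Real.log_pos (by linarith)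
  set C : ℝ := 1 + ((k:ℝ)+1)*(n:ℝ) + 3*L + ((k:ℝ)+1) with hCdef
  clear_value C
  have hC : 0 < C := by rw [hCdef]; nlinarith [mul_nonneg (by linarith : (0:ℝ) ≤ (k:ℝ)+1) (by linarith : (0:ℝ) ≤ (n:ℝ))]
  set K : ℝ := 2*((k:ℝ)+1)*C with hKdef
  clear_value K
  have hK : 0 < K := by rw [hKdef]; exact mul_pos (by linarith) hC
  set M : ℝ := ∑ j ∈ Finset.range a₀, |U j| with hMdef
  clear_value M
  have hM0 : 0 ≤ M := by rw [hMdef]; exact Finset.sum_nonneg fun j _ => abs_nonneg _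
  have hMle : ∀ N, N < a₀ → U N ≤ M := by
    intro N hN
    rw [hMdef]
    calc U N ≤ |U N| := le_abs_self _
    _ ≤ ∑ j ∈ Finset.range a₀, |U j| := Finset.single_le_sum (fun j _ => abs_nonneg (U j)) (Finset.mem_range.mpr hN)
  set a₁ : ℝ := (a₀:ℝ) ^ max 1 (1/γ₃) with ha₁def
  clear_value a₁
  have ha₁a₀ : (a₀:ℝ) ≤ a₁ := by
    rw [ha₁def]
    have h := Real.rpow_le_rpow_of_exponent_le ha₀1 (le_max_left 1 (1/γ₃))
    calc (a₀:ℝ) = (a₀:ℝ) ^ (1:ℝ) := (Real.rpow_one _).symm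
    _ ≤ (a₀:ℝ) ^ max 1 (1/γ₃) := h
  have ha₁1 : 1 ≤ a₁ := le_trans ha₀1 ha₁a₀
  have ha₁γ₃ : (a₀:ℝ) ^ (1/γ₃) ≤ a₁ := by
    rw [ha₁def]; exact Real.rpow_le_rpow_of_exponent_le ha₀1 (le_max_right 1 (1/γ₃))
  have hXpos : ∀ a, a₀ ≤ a → 0 < δ a ^ k * σ a ^ (k+1) := by
    intro a ha
    have h1 : 0 < δ a := by linarith [hδ2 a ha]
    have h2' : 0 < σ a := by linarith [hσ2 a ha]
    positivity
  have hδτpos : ∀ a, a₀ ≤ a → 0 < δ a + τ a := by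
    intro a ha; have := hδ2 a ha; have := hτ2 a ha; linarith
  have hδk1 : ∀ a, a₀ ≤ a → 1 ≤ δ a ^ k := by
    intro a ha; exact one_le_pow₀ (by linarith [hδ2 a ha])
  have hpow2 : ∀ a, a₀ ≤ a → 2 ≤ σ a ^ (k+1) := by
    intro a ha
    exact le_trans (hσ2 a ha) (le_self_pow₀ (by linarith [hσ2 a ha]) (Nat.succ_ne_zero k))
  have hlow : ∀ a, a₀ ≤ a → (a:ℝ)^γ₁ * (δ a + τ a) < U a / (δ a ^ k * σ a ^ (k+1)) := by
    intro a ha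
    have h := (h2 a ha).1
    have hX : 0 < δ a ^ k * σ a ^ (k+1) := hXpos a ha
    have hδτ : 0 < δ a + τ a := hδτpos a ha
    rw [show (δ a + τ a) * δ a ^ k * σ a ^ (k+1) = (δ a ^ k * σ a ^ (k+1)) * (δ a + τ a) from by ring, ← div_div] at h
    exact (lt_div_iff₀ hδτ).mp h
  have hupp : ∀ a, a₀ ≤ a → U a / (δ a ^ k * σ a ^ (k+1)) < (a:ℝ)^γ₂ * (δ a + τ a) := by
    intro a ha
    have h := (h2 a ha).2
    have hδτ : 0 < δ a + τ a := hδτpos a ha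
    rw [show (δ a + τ a) * δ a ^ k * σ a ^ (k+1) = (δ a ^ k * σ a ^ (k+1)) * (δ a + τ a) from by ring, ← div_div] at h
    have := (div_lt_iff₀ hδτ).mp h
    linarith [this]
  have hU8 : ∀ a, a₀ ≤ a → 8 * (a:ℝ)^γ₁ < U a := by
    intro a ha
    have h := hlow a ha
    have hX := hXpos a ha
    have h' : (a:ℝ)^γ₁ * (δ a + τ a) * (δ a ^ k * σ a ^ (k+1)) < U a := (lt_div_iff₀ hX).mp h
    have hX2 : (2:ℝ) ≤ δ a ^ k * σ a ^ (k+1) := by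
      calc (2:ℝ) = 1*2 := by norm_num
      _ ≤ δ a ^ k * σ a ^ (k+1) :=
        mul_le_mul (hδk1 a ha) (hpow2 a ha) (by norm_num) (by linarith [hδk1 a ha])
    have h8 : (8:ℝ) ≤ (δ a + τ a) * (δ a ^ k * σ a ^ (k+1)) := by
      calc (8:ℝ) = 4*2 := by norm_num
      _ ≤ (δ a + τ a) * (δ a ^ k * σ a ^ (k+1)) :=
        mul_le_mul (by linarith [hδ2 a ha, hτ2 a ha]) hX2 (by norm_num) (by linarith [hδ2 a ha, hτ2 a ha])
    have ha0 : (0:ℝ) ≤ (a:ℝ)^γ₁ := Real.rpow_nonneg (Nat.cast_nonneg a) _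
    nlinarith [mul_le_mul_of_nonneg_right h8 ha0]
  -- eventual conditions on T
  have he1 : 0 < c₂ - 1/γ₁ := sub_pos.mpr hc₂'
  have hγpos : 0 < γ₃*γ₁/γ₂ := by positivity
  have hev : ∀ᶠ T : ℝ in Filter.atTop,
      1 ≤ T ∧ a₁ + 1 ≤ T ^ c₂ ∧ K ^ (1/γ₁) + 2 ≤ T ^ (c₂ - 1/γ₁) ∧ M ≤ 8 * T ^ (γ₃*γ₁/γ₂) := by
    have e1 := Filter.eventually_ge_atTop (1:ℝ)
    have e2 := (tendsto_rpow_atTop hc₂).eventually_ge_atTop (a₁ + 1)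
    have e3 := (tendsto_rpow_atTop he1).eventually_ge_atTop (K ^ (1/γ₁) + 2)
    have e4 := (tendsto_rpow_atTop hγpos).eventually_ge_atTop (M/8)
    filter_upwards [e1, e2, e3, e4] with T h1' h2' h3' h4'
    exact ⟨h1', h2', h3', by linarith⟩
  obtain ⟨T₀, hT₀⟩ := Filter.eventually_atTop.mp hev
  refine ⟨T₀, fun T hT => ?_⟩
  obtain ⟨hT1, hTa₁, hTK, hTM⟩ := hT₀ T hT
  have hTpos : (0:ℝ) < T := lt_of_lt_of_le zero_lt_one hT1
  -- the candidate upper bound for i₀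
  set B : ℝ := max a₁ ((K*T) ^ (1/γ₁)) with hBdef
  clear_value B
  have hB0 : (0:ℝ) ≤ B := by rw [hBdef]; exact le_trans (by linarith) (le_max_left _ _)
  set ic : ℕ := ⌈B⌉₊ with hicdef
  clear_value ic
  have hicB : B ≤ (ic:ℝ) := by rw [hicdef]; exact Nat.le_ceil B
  have hica₁ : a₁ ≤ (ic:ℝ) := le_trans (by rw [hBdef]; exact le_max_left _ _) hicB
  have hica₀ : a₀ ≤ ic := by
    have h : (a₀:ℝ) ≤ (ic:ℝ) := le_trans ha₁a₀ hica₁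
    exact_mod_cast h
  have hicK : K*T ≤ (ic:ℝ) ^ γ₁ := by
    have h1 : (K*T) ^ (1/γ₁) ≤ (ic:ℝ) := le_trans (by rw [hBdef]; exact le_max_right _ _) hicB
    have h2' : ((K*T) ^ (1/γ₁)) ^ γ₁ ≤ (ic:ℝ) ^ γ₁ :=
      Real.rpow_le_rpow (Real.rpow_nonneg (mul_nonneg hK.le hTpos.le) _) h1 hγ₁.le
    rwa [← Real.rpow_mul (mul_nonneg hK.le hTpos.le), one_div_mul_cancel (ne_of_gt hγ₁), Real.rpow_one] at h2'
  have hPic : a₁ ≤ (ic:ℝ) ∧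
      2 * ((k:ℝ) + 1) * T * (δ ic + ((k:ℝ) + 1) * (τ ic + n * δ ic) + 3 * L * δ ic) <
        U ic / (δ ic ^ k * σ ic ^ (k + 1)) := by
    refine ⟨hica₁, ?_⟩
    have hδi := hδ2 ic hica₀
    have hτi := hτ2 ic hica₀
    have hinner : δ ic + ((k:ℝ)+1)*(τ ic + (n:ℝ)*δ ic) + 3*L*δ ic ≤ C*(δ ic + τ ic) := by
      rw [hCdef]
      nlinarith [mul_nonneg (mul_nonneg (by linarith : (0:ℝ) ≤ (k:ℝ)+1) (by linarith : (0:ℝ) ≤ (n:ℝ))) (by linarith : (0:ℝ) ≤ τ ic),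
        mul_nonneg hL.le (by linarith : (0:ℝ) ≤ τ ic),
        mul_nonneg (by linarith : (0:ℝ) ≤ (k:ℝ)+1) (by linarith : (0:ℝ) ≤ δ ic)]
    have hmul := mul_le_mul_of_nonneg_left hinner
      (mul_nonneg (by linarith : (0:ℝ) ≤ 2*((k:ℝ)+1)) hTpos.le)
    have h2' : K*T*(δ ic + τ ic) ≤ (ic:ℝ)^γ₁*(δ ic + τ ic) :=
      mul_le_mul_of_nonneg_right hicK (by linarith)
    have hlo := hlow ic hica₀
    calc 2*((k:ℝ)+1)*T*(δ ic + ((k:ℝ)+1)*(τ ic + (n:ℝ)*δ ic) + 3*L*δ ic)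
        ≤ 2*((k:ℝ)+1)*T*(C*(δ ic + τ ic)) := by nlinarith [hmul]
      _ = K*T*(δ ic + τ ic) := by rw [hKdef]; ring
      _ ≤ (ic:ℝ)^γ₁*(δ ic + τ ic) := h2'
      _ < U ic / (δ ic ^ k * σ ic ^ (k+1)) := hlo
  have hex : ∃ i : ℕ, a₁ ≤ (i:ℝ) ∧
      2 * ((k:ℝ) + 1) * T * (δ i + ((k:ℝ) + 1) * (τ i + n * δ i) + 3 * L * δ i) <
        U i / (δ i ^ k * σ i ^ (k + 1)) := ⟨ic, hPic⟩
  obtain ⟨i₀, hi₀least⟩ : ∃ i₀ : ℕ, IsLeast {i : ℕ | a₁ ≤ (i:ℝ) ∧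
      2 * ((k:ℝ) + 1) * T * (δ i + ((k:ℝ) + 1) * (τ i + n * δ i) + 3 * L * δ i) <
        U i / (δ i ^ k * σ i ^ (k + 1))} i₀ :=
    ⟨Nat.find hex, Nat.find_spec hex, fun j hj => Nat.find_min' hex hj⟩
  obtain ⟨hi₀a₁, hi₀ineq⟩ := hi₀least.1
  have hi₀a₀ : a₀ ≤ i₀ := by
    have h : (a₀:ℝ) ≤ (i₀:ℝ) := le_trans ha₁a₀ hi₀a₁
    exact_mod_cast h
  have hi₀pos : 0 < i₀ := by
    have h : (0:ℝ) < (i₀:ℝ) := lt_of_lt_of_le zero_lt_one (le_trans ha₁1 hi₀a₁)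
    exact_mod_cast h
  have hi₀ic : i₀ ≤ ic := hi₀least.2 hPic
  have hδi := hδ2 i₀ hi₀a₀
  have hτi := hτ2 i₀ hi₀a₀
  have hδτi : 0 < δ i₀ + τ i₀ := hδτpos i₀ hi₀a₀
  -- 2T < i₀^γ₂
  have hinner0 : δ i₀ + τ i₀ ≤ δ i₀ + ((k:ℝ)+1)*(τ i₀ + (n:ℝ)*δ i₀) + 3*L*δ i₀ := by
    linarith only [mul_nonneg hk0 (by linarith only [hτi] : (0:ℝ) ≤ τ i₀),
      mul_nonneg (mul_nonneg (by linarith only [hk0] : (0:ℝ) ≤ (k:ℝ)+1) (by linarith only [hn1] : (0:ℝ) ≤ (n:ℝ))) (by linarith only [hδi] : (0:ℝ) ≤ δ i₀),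
      mul_nonneg hL.le (by linarith only [hδi] : (0:ℝ) ≤ δ i₀)]
  have hinnernn : (0:ℝ) ≤ δ i₀ + ((k:ℝ)+1)*(τ i₀ + (n:ℝ)*δ i₀) + 3*L*δ i₀ := by
    linarith only [hinner0, hδi, hτi]
  have h2T : 2*T < (i₀:ℝ)^γ₂ := by
    have s1 : 2*T*(δ i₀ + τ i₀) ≤ 2*T*(δ i₀ + ((k:ℝ)+1)*(τ i₀ + (n:ℝ)*δ i₀) + 3*L*δ i₀) :=
      mul_le_mul_of_nonneg_left hinner0 (by linarith only [hTpos])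
    have s2 : 2*T*(δ i₀ + ((k:ℝ)+1)*(τ i₀ + (n:ℝ)*δ i₀) + 3*L*δ i₀) ≤
        2*((k:ℝ)+1)*T*(δ i₀ + ((k:ℝ)+1)*(τ i₀ + (n:ℝ)*δ i₀) + 3*L*δ i₀) := by
      linarith only [mul_nonneg (mul_nonneg hk0 hTpos.le) hinnernn]
    have hup := hupp i₀ hi₀a₀
    have u3 : 2*T*(δ i₀ + τ i₀) < (i₀:ℝ)^γ₂*(δ i₀ + τ i₀) := by
      linarith only [s1, s2, hi₀ineq, hup]
    exact lt_of_mul_lt_mul_right u3 hδτi.le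
  have h2T' : (2*T)^(1/γ₂) < (i₀:ℝ) := by
    have h := Real.rpow_lt_rpow (by linarith : (0:ℝ) ≤ 2*T) h2T (by positivity : (0:ℝ) < 1/γ₂)
    rwa [← Real.rpow_mul (Nat.cast_nonneg i₀), mul_one_div, div_self (ne_of_gt hγ₂), Real.rpow_one] at h
  -- a₀ ≤ ceil(i₀^γ₃)
  have hi₀γ₃a₀ : (a₀:ℝ) ≤ (i₀:ℝ)^γ₃ := by
    have h1 : (a₀:ℝ)^(1/γ₃) ≤ (i₀:ℝ) := le_trans ha₁γ₃ hi₀a₁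
    have h2' : ((a₀:ℝ)^(1/γ₃))^γ₃ ≤ (i₀:ℝ)^γ₃ :=
      Real.rpow_le_rpow (Real.rpow_nonneg (by positivity) _) h1 hγ₃.le
    rwa [← Real.rpow_mul (by positivity), one_div_mul_cancel (ne_of_gt hγ₃), Real.rpow_one] at h2'
  have hceil_a₀ : a₀ ≤ ⌈(i₀:ℝ)^γ₃⌉₊ := by
    have h : (a₀:ℝ) ≤ (⌈(i₀:ℝ)^γ₃⌉₊:ℝ) := le_trans hi₀γ₃a₀ (Nat.le_ceil _)
    exact_mod_cast h
  -- M < τ i₀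
  have hτM : M < τ i₀ := by
    have f2 : T^(γ₃*γ₁/γ₂) ≤ (2*T)^(γ₃*γ₁/γ₂) :=
      Real.rpow_le_rpow hTpos.le (by linarith only [hTpos]) hγpos.le
    have f3 : (2*T)^(γ₃*γ₁/γ₂) = ((2*T)^(1/γ₂))^(γ₃*γ₁) := by
      rw [show γ₃*γ₁/γ₂ = (1/γ₂)*(γ₃*γ₁) from by ring, Real.rpow_mul (by linarith only [hTpos] : (0:ℝ) ≤ 2*T)]
    have f4 : ((2*T)^(1/γ₂))^(γ₃*γ₁) < ((i₀:ℝ))^(γ₃*γ₁) :=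
      Real.rpow_lt_rpow (Real.rpow_nonneg (by linarith only [hTpos]) _) h2T' (by positivity)
    have f5 : ((i₀:ℝ))^(γ₃*γ₁) = (((i₀:ℝ))^γ₃)^γ₁ := Real.rpow_mul (Nat.cast_nonneg _) _ _
    have f6 : ((i₀:ℝ)^γ₃)^γ₁ ≤ ((⌈(i₀:ℝ)^γ₃⌉₊:ℝ))^γ₁ :=
      Real.rpow_le_rpow (Real.rpow_nonneg (Nat.cast_nonneg _) _) (Nat.le_ceil _) hγ₁.le
    have f7 : 8*((⌈(i₀:ℝ)^γ₃⌉₊:ℝ))^γ₁ < U ⌈(i₀:ℝ)^γ₃⌉₊ := hU8 _ hceil_a₀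
    have f8 : U ⌈(i₀:ℝ)^γ₃⌉₊ ≤ τ i₀ := h3 i₀ hi₀a₀
    linarith only [hTM, f2, f3, f4, f5, f6, f7, f8]
  -- T^c₁ ≤ ceil(i₀^γ₃)
  have hTc₁i : T^c₁ ≤ (⌈(i₀:ℝ)^γ₃⌉₊:ℝ) := by
    have g1 : T^c₁ ≤ T^(γ₃/γ₂) := Real.rpow_le_rpow_of_exponent_le hT1 hc₁'.le
    have g2 : T^(γ₃/γ₂) ≤ (2*T)^(γ₃/γ₂) :=
      Real.rpow_le_rpow hTpos.le (by linarith only [hTpos]) (by positivity)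
    have g3 : (2*T)^(γ₃/γ₂) = ((2*T)^(1/γ₂))^γ₃ := by
      rw [show γ₃/γ₂ = (1/γ₂)*γ₃ from by ring, Real.rpow_mul (by linarith only [hTpos] : (0:ℝ) ≤ 2*T)]
    have g4 : ((2*T)^(1/γ₂))^γ₃ < ((i₀:ℝ))^γ₃ :=
      Real.rpow_lt_rpow (Real.rpow_nonneg (by linarith only [hTpos]) _) h2T' hγ₃
    have g5 : (i₀:ℝ)^γ₃ ≤ (⌈(i₀:ℝ)^γ₃⌉₊:ℝ) := Nat.le_ceil _
    linarith only [g1, g2, g3, g4, g5]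
  -- i₀ (hence N₀) is at most T^c₂
  have hicTc₂ : (ic:ℝ) ≤ T^c₂ := by
    have hicB1 : (ic:ℝ) < B + 1 := by rw [hicdef]; exact Nat.ceil_lt_add_one (by rw [← hBdef] at *; exact hB0)
    have hKT : (K*T)^(1/γ₁) = K^(1/γ₁) * T^(1/γ₁) := Real.mul_rpow hK.le hTpos.le
    have hT1' : (1:ℝ) ≤ T^(1/γ₁) := by
      have h := Real.rpow_le_rpow_of_exponent_le hT1 (by positivity : (0:ℝ) ≤ 1/γ₁)
      rwa [Real.rpow_zero] at h
    have hsplit : T^c₂ = T^(1/γ₁) * T^(c₂ - 1/γ₁) := by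
      rw [← Real.rpow_add hTpos]; congr 1; ring
    have hK0' : (0:ℝ) ≤ K^(1/γ₁) := Real.rpow_nonneg hK.le _
    have hKT2 : (K*T)^(1/γ₁) + 1 ≤ T^c₂ := by
      rw [hKT, hsplit]
      linarith only [hT1',
        mul_nonneg (by linarith only [hTK] : (0:ℝ) ≤ T^(c₂ - 1/γ₁) - K^(1/γ₁) - 2)
          (by linarith only [hT1'] : (0:ℝ) ≤ T^(1/γ₁))]
    have hBle : B ≤ T^c₂ - 1 := by
      rw [hBdef]
      exact max_le (by linarith only [hTa₁]) (by linarith only [hKT2])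
    linarith only [hicB1, hBle]
  -- conclusion
  refine ⟨i₀, ⟨hi₀least, ?_⟩⟩
  intro S hS1 hS2
  have hσ0 : (0:ℝ) < σ i₀ ^ (k+1) := by
    have h : 0 < σ i₀ := by linarith [hσ2 i₀ hi₀a₀]
    positivity
  have hQi₀ : 0 < i₀ ∧ 2*S ≤ U i₀ / σ i₀ ^ (k+1) := by
    refine ⟨hi₀pos, ?_⟩
    have heq : (2:ℝ)*((U i₀/2)/σ i₀^(k+1)) = U i₀/σ i₀^(k+1) := by ring
    linarith only [heq, hS2]
  have hexQ : ∃ N : ℕ, 0 < N ∧ 2*S ≤ U N / σ i₀ ^ (k+1) := ⟨i₀, hQi₀⟩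
  obtain ⟨N₀, hN₀least⟩ : ∃ N₀ : ℕ, IsLeast {N : ℕ | 0 < N ∧ 2*S ≤ U N / σ i₀ ^ (k+1)} N₀ :=
    ⟨Nat.find hexQ, Nat.find_spec hexQ, fun b hb => Nat.find_min' hexQ hb⟩
  obtain ⟨hN₀pos, hN₀U⟩ := hN₀least.1
  have hN₀i₀ : N₀ ≤ i₀ := hN₀least.2 hQi₀
  have hUN₀ : 2*S*(σ i₀^(k+1)) ≤ U N₀ := (le_div_iff₀ hσ0).mp hN₀U
  have hSτ : τ i₀ + (n:ℝ)*δ i₀ < S*(σ i₀^(k+1)) := (div_lt_iff₀ hσ0).mp hS1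
  have hnδ0 : (0:ℝ) ≤ (n:ℝ)*δ i₀ := mul_nonneg (by linarith only [hn1]) (by linarith only [hδi])
  have hτhalf : τ i₀ + (n:ℝ)*δ i₀ < U N₀ / 2 := by
    linarith only [hUN₀, hSτ, hτi, hnδ0]
  have hTc₁N₀ : T^c₁ ≤ (N₀:ℝ) := by
    by_contra hcon
    push_neg at hcon
    rcases lt_or_ge N₀ a₀ with hcase | hcase
    · have hM' := hMle N₀ hcase
      linarith only [hM', hUN₀, hSτ, hτM, hnδ0, hτi]
    · have hlt : (N₀:ℝ) < (⌈(i₀:ℝ)^γ₃⌉₊:ℝ) := lt_of_lt_of_le hcon hTc₁i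
      have hle : N₀ ≤ ⌈(i₀:ℝ)^γ₃⌉₊ := le_of_lt (by exact_mod_cast hlt)
      have hmono : U N₀ ≤ U ⌈(i₀:ℝ)^γ₃⌉₊ := hUm hcase (le_trans hcase hle) hle
      have f8 : U ⌈(i₀:ℝ)^γ₃⌉₊ ≤ τ i₀ := h3 i₀ hi₀a₀
      linarith only [hmono, f8, hUN₀, hSτ, hnδ0, hτi]
  have hN₀Tc₂ : (N₀:ℝ) ≤ T^c₂ := by
    have h1 : (N₀:ℝ) ≤ (ic:ℝ) := by
      exact_mod_cast le_trans hN₀i₀ hi₀ic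
    linarith only [h1, hicTc₂]
  exact ⟨N₀, ⟨hN₀least, hN₀i₀, hτhalf, hTc₁N₀, hN₀Tc₂⟩⟩
end
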